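/- arXiv:2102.00545 — 2 statements merged into one kernel-verified Lean document; each statement's English description precedes it below -/
import Mathlib

section
/- Let g be the Riemannian metric on an exterior domain of ℝ³ given in spherical coordinates by g = N(r)^{-2}dr² + r²g_{S²} with N²(r) = c₁ − m/r + c₂r, c₁, c₂ > 0. In Cartesian coordinates, g_{ij} − δ_{ij} = (x_i x_j / r²)·(1−N²)/N², which is O(r⁰) with derivatives decaying one order per derivative; consequently ∂_j∂_i∂_i g_{aa} − ∂_j∂_u∂_i g_{ui} = O(r^{-3}) and lim_{r→∞} ∫_{S²_r} (∂_j∂_i∂_i g_{aa} − ∂_j∂_u∂_i g_{ui})(x_j/r) dω_r = 0. -/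
/-!
With `M(r) = r N²(r) = c₂ r² + c₁ r - m`, the perturbation is `g_{ij} - δ_{ij} = x_i x_j G₀(r)`
where `G₀(r) = (r - M(r)) / (r² M(r))`. Put `G_{i+1}(r) = G_i'(r) / r`, so that
`∂_k (G_i(r)) = x_k G_{i+1}(r)`. Each `G_i` is a rational function whose numerator has degree at most
`2i + 2` and whose denominator `r^{2i+2} M^{i+1}` has degree `4i + 4`, hence `G_i = O(r^{-2i-2})`.
Call a product `x_{a₁} ⋯ x_{a_n} G_i(r)` with `n + w = 2i + 2` a symbol of weight `w`; it is
`O(r^{-w})`, and by the Leibniz rule each Cartesian derivative of a weight-`w` symbol is a sum of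
weight-`(w+1)` symbols. So `g - δ` has weight 0, its first derivatives have weight 1, and `T_j` has
weight 3. On the sphere of radius `r` the flux integrand is then `O(r^{-3}) · r² = O(r^{-1})`. This
tends to `0` because the unit sphere, being a Lipschitz image of a square, has finite `μH[2]`.
-/

open Filter MeasureTheory

/-- Partial derivative in the `i`-th coordinate direction of a scalar function
on `ℝ³` (Euclidean). -/
noncomputable def pd3 (i : Fin 3) (f : EuclideanSpace ℝ (Fin 3) → ℝ) :
    EuclideanSpace ℝ (Fin 3) → ℝ :=
  fun x => fderiv ℝ f x (EuclideanSpace.single i 1)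

open Asymptotics Bornology Polynomial Real Metric Topology
open scoped RealInnerProductSpace ENNReal

section RadialSymbol

variable {E : Type*} [NormedAddCommGroup E] [InnerProductSpace ℝ E]

theorem hasFDerivAt_norm_of_ne_zero {x : E} (hx : x ≠ 0) :
    HasFDerivAt (‖·‖) (‖x‖⁻¹ • innerSL ℝ x) x := by
  have h := (hasStrictFDerivAt_norm_sq x).hasFDerivAt.sqrt (by positivity)
  simp only [Real.sqrt_sq (norm_nonneg _)] at h
  convert h using 1
  ext u
  simp only [smul_apply, coe_innerSL_apply, smul_eq_mul, one_div,
    mul_inv_rev, nsmul_eq_mul, Nat.cast_ofNat]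
  field_simp

/-- Symbols of weight `w` (decay order `‖x‖⁻ʷ`) built from radial profiles `G i` of weight
`2 i + 2`, identified when they agree on `{x | R < ‖x‖}`. -/
inductive IsRadialSymbol (G : ℕ → ℝ → ℝ) (R : ℝ) : ℕ → (E → ℝ) → Prop
  | radial (i : ℕ) : IsRadialSymbol G R (2 * i + 2) fun x => G i ‖x‖
  | inner_mul {w : ℕ} {f : E → ℝ} (v : E) :
      IsRadialSymbol G R (w + 1) f → IsRadialSymbol G R w fun x => ⟪v, x⟫ * f x
  | zero (w : ℕ) : IsRadialSymbol G R w 0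
  | add {w : ℕ} {f g : E → ℝ} :
      IsRadialSymbol G R w f → IsRadialSymbol G R w g → IsRadialSymbol G R w (f + g)
  | const_mul {w : ℕ} {f : E → ℝ} (c : ℝ) :
      IsRadialSymbol G R w f → IsRadialSymbol G R w fun x => c * f x
  | congr {w : ℕ} {f g : E → ℝ} :
      IsRadialSymbol G R w f → Set.EqOn f g {x | R < ‖x‖} → IsRadialSymbol G R w g

namespace IsRadialSymbol

variable {G : ℕ → ℝ → ℝ} {R : ℝ} {w : ℕ} {f g : E → ℝ}

theorem neg (hf : IsRadialSymbol G R w f) : IsRadialSymbol G R w (-f) :=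
  (hf.const_mul (-1)).congr fun x _ => by simp

theorem sub (hf : IsRadialSymbol G R w f) (hg : IsRadialSymbol G R w g) :
    IsRadialSymbol G R w (f - g) :=
  (hf.add hg.neg).congr fun x _ => by simp [sub_eq_add_neg]

theorem sum {ι : Type*} (s : Finset ι) {f : ι → E → ℝ}
    (hf : ∀ i ∈ s, IsRadialSymbol G R w (f i)) : IsRadialSymbol G R w (∑ i ∈ s, f i) :=
  Finset.sum_induction _ _ (fun _ _ => add) (zero w) hf

theorem isBigO (hG : ∀ i, G i =O[atTop] fun u => (u ^ (2 * i + 2))⁻¹)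
    (hf : IsRadialSymbol G R w f) : f =O[cobounded E] fun x => (‖x‖ ^ w)⁻¹ := by
  induction hf with
  | radial i => exact (hG i).comp_tendsto tendsto_norm_cobounded_atTop
  | @inner_mul w f v _ ih =>
    have hv : (fun x => ⟪v, x⟫) =O[cobounded E] fun x => ‖x‖ :=
      isBigO_of_le' (c := ‖v‖) _ fun x => by simpa using abs_real_inner_le_norm v x
    refine (hv.mul ih).congr' EventuallyEq.rfl ?_
    filter_upwards [eventually_cobounded_le_norm 1] with x hx
    have : ‖x‖ ≠ 0 := by positivity
    field_simp
    ring
  | zero w => exact isBigO_zero _ _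
  | add _ _ ihf ihg => exact ihf.add ihg
  | const_mul c _ ih => exact ih.const_mul_left c
  | congr _ hfg ih =>
    refine ih.congr' ?_ EventuallyEq.rfl
    filter_upwards [eventually_cobounded_le_norm (R + 1)] with x hx
    exact hfg (show R < ‖x‖ by linarith)

theorem exists_uniform_bound {ι : Type*} [Fintype ι] {f : ι → E → ℝ}
    (hG : ∀ i, G i =O[atTop] fun u => (u ^ (2 * i + 2))⁻¹)
    (hf : ∀ i, IsRadialSymbol G R w (f i)) :
    ∃ C R₀, ∀ i x, R₀ ≤ ‖x‖ → |f i x| ≤ C / ‖x‖ ^ w := by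
  obtain ⟨C, hC⟩ := (isBigO_pi.2 fun i => (hf i).isBigO hG).bound
  obtain ⟨R₀, -, hR₀⟩ := hasBasis_cobounded_norm.eventually_iff.1 hC
  refine ⟨C, R₀, fun i x hx => (norm_le_pi_norm (fun i => f i x) i).trans ?_⟩
  simpa [div_eq_mul_inv] using hR₀ hx

theorem hasFDerivAt_radial (hR : 0 ≤ R)
    (hG : ∀ i u, R < u → HasDerivAt (G i) (u * G (i + 1) u) u) (i : ℕ) {x : E}
    (hx : R < ‖x‖) : HasFDerivAt (fun y => G i ‖y‖) (G (i + 1) ‖x‖ • innerSL ℝ x) x := by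
  have hx0 : ‖x‖ ≠ 0 := (hR.trans_lt hx).ne'
  refine ((hG i _ hx).comp_hasFDerivAt x
    (hasFDerivAt_norm_of_ne_zero (norm_ne_zero_iff.1 hx0))).congr_fderiv ?_
  rw [smul_smul]
  congr 1
  field_simp

theorem differentiableAt_and_fderiv_apply (hR : 0 ≤ R)
    (hG : ∀ i u, R < u → HasDerivAt (G i) (u * G (i + 1) u) u)
    (hf : IsRadialSymbol G R w f) :
    (∀ x, R < ‖x‖ → DifferentiableAt ℝ f x) ∧
      ∀ v, IsRadialSymbol G R (w + 1) fun x => fderiv ℝ f x v := by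
  induction hf with
  | radial i =>
    refine ⟨fun x hx => (hasFDerivAt_radial hR hG i hx).differentiableAt, fun v => ?_⟩
    refine ((radial (E := E) (G := G) (R := R) (i + 1)).inner_mul v).congr fun x hx => ?_
    simp [(hasFDerivAt_radial hR hG i hx).fderiv, real_inner_comm, mul_comm]
  | @inner_mul w f v hf ih =>
    have hderiv : ∀ x, R < ‖x‖ → HasFDerivAt (fun y => ⟪v, y⟫ * f y)
        (⟪v, x⟫ • fderiv ℝ f x + f x • innerSL ℝ v) x := fun x hx =>
      (innerSL ℝ v).hasFDerivAt.mul (ih.1 x hx).hasFDerivAt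
    refine ⟨fun x hx => (hderiv x hx).differentiableAt, fun u => ?_⟩
    refine (((ih.2 u).inner_mul v).add (hf.const_mul ⟪v, u⟫)).congr fun x hx => ?_
    rw [(hderiv x hx).fderiv]
    simp [mul_comm]
  | zero w =>
    exact ⟨fun x _ => differentiableAt_const 0, fun v => (zero _).congr fun x _ => by simp⟩
  | add _ _ ihf ihg =>
    refine ⟨fun x hx => (ihf.1 x hx).add (ihg.1 x hx),
      fun v => ((ihf.2 v).add (ihg.2 v)).congr fun x hx => ?_⟩
    simp [fderiv_add (ihf.1 x hx) (ihg.1 x hx)]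
  | const_mul c _ ih =>
    refine ⟨fun x hx => (ih.1 x hx).const_mul c,
      fun v => ((ih.2 v).const_mul c).congr fun x hx => ?_⟩
    simp [fderiv_const_mul (ih.1 x hx)]
  | congr _ hfg ih =>
    have heq : ∀ x, R < ‖x‖ → _ := fun x (hx : R < ‖x‖) =>
      hfg.eventuallyEq_of_mem ((isOpen_lt continuous_const continuous_norm).mem_nhds hx)
    refine ⟨fun x hx => (ih.1 x hx).congr_of_eventuallyEq (heq x hx).symm,
      fun v => (ih.2 v).congr fun x hx => ?_⟩
    simp [(heq x hx).fderiv_eq]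

end IsRadialSymbol

end RadialSymbol

section RadialTower

variable (M p₀ : ℝ[X])

/-- Numerators of `G_0 = p₀ / (X² M)` and `G_{i+1} = G_i' / X` over the common denominator
`X ^ (2 i + 2) * M ^ (i + 1)`. -/
noncomputable def towerNum : ℕ → ℝ[X]
  | 0 => p₀
  | i + 1 => derivative (towerNum i) * X * M - C (2 * i + 2 : ℝ) * towerNum i * M
      - C (i + 1 : ℝ) * X * towerNum i * derivative M

noncomputable def radialTower (i : ℕ) (u : ℝ) : ℝ :=
  (towerNum M p₀ i).eval u / (u ^ (2 * i + 2) * M.eval u ^ (i + 1))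

variable {M p₀}

theorem hasDerivAt_radialTower (i : ℕ) {u : ℝ} (hu : u ≠ 0) (hM : M.eval u ≠ 0) :
    HasDerivAt (radialTower M p₀ i) (u * radialTower M p₀ (i + 1) u) u := by
  have h := ((towerNum M p₀ i).hasDerivAt u).div
    ((hasDerivAt_pow (2 * i + 2) u).fun_mul ((M.hasDerivAt u).fun_pow (i + 1)))
    (by positivity)
  refine h.congr_deriv ?_
  rw [show 2 * i + 2 - 1 = 2 * i + 1 by omega, Nat.add_sub_cancel]
  simp only [radialTower, towerNum, eval_sub, eval_mul, eval_C, eval_X]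
  field_simp
  push_cast
  ring

theorem natDegree_towerNum_le (hM : M.natDegree ≤ 2) (hp : p₀.natDegree ≤ 2) (i : ℕ) :
    (towerNum M p₀ i).natDegree ≤ 2 * i + 2 := by
  induction i with
  | zero => exact hp
  | succ i ih =>
    have hd := (natDegree_derivative_le (towerNum M p₀ i)).trans (Nat.sub_le_sub_right ih 1)
    have hdM := (natDegree_derivative_le M).trans (Nat.sub_le_sub_right hM 1)
    have h₁ := natDegree_mul_le_of_le (natDegree_mul_le_of_le hd natDegree_X_le) hM
    have h₂ :=
      natDegree_mul_le_of_le (natDegree_mul_le_of_le (natDegree_C (2 * i + 2 : ℝ)).le ih) hM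
    have h₃ := natDegree_mul_le_of_le (natDegree_mul_le_of_le
      (natDegree_mul_le_of_le (natDegree_C (i + 1 : ℝ)).le natDegree_X_le) ih) hdM
    exact (natDegree_sub_le_of_le (natDegree_sub_le_of_le h₁ h₂) h₃).trans (by omega)

theorem radialTower_isBigO (hM : M.natDegree = 2) (hp : p₀.natDegree ≤ 2) (i : ℕ) :
    radialTower M p₀ i =O[atTop] fun u => (u ^ (2 * i + 2))⁻¹ := by
  have hM0 : M ≠ 0 := ne_zero_of_natDegree_gt (n := 0) (by omega)
  have hdeg : (towerNum M p₀ i).degree ≤ (M ^ (i + 1)).degree := by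
    rw [degree_eq_natDegree (pow_ne_zero _ hM0), natDegree_pow, hM]
    exact degree_le_of_natDegree_le ((natDegree_towerNum_le hM.le hp i).trans (by omega))
  refine ((isBigO_atTop_of_degree_le _ _ hdeg).mul
    (isBigO_refl (fun u => (u ^ (2 * i + 2) * M.eval u ^ (i + 1))⁻¹) atTop)).congr' ?_ ?_
  · filter_upwards with u
    simp [radialTower, div_eq_mul_inv]
  · filter_upwards [eventually_ne_atTop 0, eventually_atTop_not_isRoot M hM0] with u hu hMu
    have : M.eval u ≠ 0 := hMu
    simp only [eval_pow]
    field_simp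

end RadialTower

section UnitSphere

noncomputable def sphericalCoords (p : Fin 2 → ℝ) : EuclideanSpace ℝ (Fin 3) :=
  !₂[sin (p 0) * cos (p 1), sin (p 0) * sin (p 1), cos (p 0)]

theorem contDiff_sphericalCoords : ContDiff ℝ 1 sphericalCoords := by
  rw [contDiff_piLp]
  intro i
  fin_cases i <;> simp only [sphericalCoords, Fin.isValue, Fin.zero_eta, Fin.mk_one,
    Fin.reduceFinMk, Matrix.cons_val, Matrix.cons_val_zero, Matrix.cons_val_one] <;> fun_prop

theorem sphere_subset_image_sphericalCoords :
    sphere (0 : EuclideanSpace ℝ (Fin 3)) 1 ⊆ sphericalCoords '' closedBall 0 4 := by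
  intro x hx
  have hsum : x 0 ^ 2 + x 1 ^ 2 + x 2 ^ 2 = 1 := by
    have h := EuclideanSpace.real_norm_sq_eq x
    rw [mem_sphere_zero_iff_norm.1 hx, Fin.sum_univ_three] at h
    linarith
  have hx2 : -1 ≤ x 2 ∧ x 2 ≤ 1 := abs_le_of_sq_le_sq' (by nlinarith) zero_le_one
  set z : ℂ := ⟨x 0, x 1⟩
  have hsin : sin (arccos (x 2)) = ‖z‖ := by
    rw [sin_arccos, Complex.norm_def, Complex.normSq_mk]
    congr 1
    linarith
  refine ⟨![arccos (x 2), z.arg], ?_, ?_⟩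
  · rw [mem_closedBall_zero_iff, pi_norm_le_iff_of_nonneg (by norm_num)]
    intro i
    fin_cases i
    · simpa [abs_of_nonneg (arccos_nonneg _)] using (arccos_le_pi _).trans pi_le_four
    · simpa using (Complex.abs_arg_le_pi z).trans pi_le_four
  · ext i
    fin_cases i
    · simp [sphericalCoords, hsin, Complex.norm_mul_cos_arg, z]
    · simp [sphericalCoords, hsin, Complex.norm_mul_sin_arg, z]
    · simp [sphericalCoords, cos_arccos hx2.1 hx2.2]

theorem hausdorffMeasure_sphere_lt_top :
    μH[2] (sphere (0 : EuclideanSpace ℝ (Fin 3)) 1) < ∞ := by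
  obtain ⟨K, hK⟩ := contDiff_sphericalCoords.contDiffOn.exists_lipschitzOnWith one_ne_zero
    (convex_closedBall 0 4) (isCompact_closedBall (0 : Fin 2 → ℝ) 4)
  have hball : μH[2] (closedBall (0 : Fin 2 → ℝ) 4) < ∞ := by
    have h : (μH[2] : Measure (Fin 2 → ℝ)) = volume := by
      simpa using hausdorffMeasure_pi_real (ι := Fin 2)
    rw [h]
    exact (isCompact_closedBall _ _).measure_lt_top
  calc μH[2] (sphere (0 : EuclideanSpace ℝ (Fin 3)) 1)
      ≤ μH[2] (sphericalCoords '' closedBall 0 4) :=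
        measure_mono sphere_subset_image_sphericalCoords
    _ ≤ (K : ℝ≥0∞) ^ (2 : ℝ) * μH[2] (closedBall (0 : Fin 2 → ℝ) 4) :=
        hK.hausdorffMeasure_image_le (by norm_num)
    _ < ∞ := ENNReal.mul_lt_top (by simp) hball

theorem tendsto_setIntegral_zero_of_norm_le_div {α F : Type*} [MeasurableSpace α]
    [NormedAddCommGroup F] [NormedSpace ℝ F] {μ : Measure α} {s : Set α} (hs : μ s < ∞)
    {f : ℝ → α → F} {C R₀ : ℝ} (hf : ∀ r, R₀ ≤ r → ∀ ω ∈ s, ‖f r ω‖ ≤ C / r) :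
    Tendsto (fun r => ∫ ω in s, f r ω ∂μ) atTop (𝓝 0) := by
  have hlim : Tendsto (fun r : ℝ => C / r * μ.real s) atTop (𝓝 0) := by
    simpa using (tendsto_const_nhds.div_atTop tendsto_id).mul_const (μ.real s)
  refine squeeze_zero_norm' ?_ hlim
  filter_upwards [eventually_ge_atTop R₀] with r hr
  exact norm_setIntegral_le_of_norm_le_const hs (hf r hr)

theorem tendsto_sphere_flux_zero {T : Fin 3 → EuclideanSpace ℝ (Fin 3) → ℝ} {C R₀ : ℝ}
    (hT : ∀ j x, R₀ ≤ ‖x‖ → |T j x| ≤ C / ‖x‖ ^ 3) :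
    Tendsto (fun r : ℝ => ∫ ω in sphere (0 : EuclideanSpace ℝ (Fin 3)) 1,
      (∑ j, T j (r • ω) * ω j) * r ^ 2 ∂μH[2]) atTop (𝓝 0) := by
  refine tendsto_setIntegral_zero_of_norm_le_div hausdorffMeasure_sphere_lt_top
    (C := 3 * C) (R₀ := max R₀ 1) fun r hr ω hω => ?_
  have hr0 : 0 < r := zero_lt_one.trans_le (le_of_max_le_right hr)
  have hω1 : ‖ω‖ = 1 := mem_sphere_zero_iff_norm.1 hω
  have hrω : ‖r • ω‖ = r := by rw [norm_smul, hω1, mul_one, norm_of_nonneg hr0.le]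
  have hterm : ∀ j, |T j (r • ω) * ω j| ≤ C / r ^ 3 := fun j => by
    have hTj := hT j (r • ω) (by rw [hrω]; exact le_of_max_le_left hr)
    have hωj : |ω j| ≤ 1 := (PiLp.norm_apply_le ω j).trans hω1.le
    rw [hrω] at hTj
    rw [abs_mul]
    simpa using mul_le_mul hTj hωj (abs_nonneg _) ((abs_nonneg _).trans hTj)
  calc ‖(∑ j, T j (r • ω) * ω j) * r ^ 2‖ = |∑ j, T j (r • ω) * ω j| * r ^ 2 := by
        rw [norm_mul, norm_eq_abs, norm_eq_abs, abs_of_nonneg (by positivity : (0 : ℝ) ≤ r ^ 2)]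
    _ ≤ (∑ _j : Fin 3, C / r ^ 3) * r ^ 2 := by
        gcongr
        exact (Finset.abs_sum_le_sum_abs _ _).trans (Finset.sum_le_sum fun j _ => hterm j)
    _ = 3 * C / r := by
        simp only [Finset.sum_const, Finset.card_univ, Fintype.card_fin, nsmul_eq_mul,
          Nat.cast_ofNat]
        field_simp

end UnitSphere

section ExteriorMetric

/-- `u ↦ u N²(u)` for `N²(u) = c₁ - m / u + c₂ u`. -/
noncomputable def lapsePoly (c₁ c₂ m : ℝ) : ℝ[X] := C c₂ * X ^ 2 + C c₁ * X + C (-m)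

/-- `lapseTower c₁ c₂ m 0 u = (1 - N²(u)) / (u² N²(u))`. -/
noncomputable def lapseTower (c₁ c₂ m : ℝ) : ℕ → ℝ → ℝ :=
  radialTower (lapsePoly c₁ c₂ m) (X - lapsePoly c₁ c₂ m)

theorem lapseTower_isBigO (c₁ m : ℝ) {c₂ : ℝ} (hc₂ : c₂ ≠ 0) (i : ℕ) :
    lapseTower c₁ c₂ m i =O[atTop] fun u => (u ^ (2 * i + 2))⁻¹ :=
  radialTower_isBigO (natDegree_quadratic hc₂)
    ((natDegree_sub_le_of_le natDegree_X_le natDegree_quadratic_le).trans (by norm_num)) i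

theorem exists_hasDerivAt_lapseTower (c₁ m : ℝ) {c₂ : ℝ} (hc₂ : 0 < c₂) (r₀ : ℝ) :
    ∃ R, r₀ ≤ R ∧ 0 ≤ R ∧ ∀ i u, R < u →
      HasDerivAt (lapseTower c₁ c₂ m i) (u * lapseTower c₁ c₂ m (i + 1) u) u := by
  have hdeg : 0 < (lapsePoly c₁ c₂ m).degree := by
    rw [lapsePoly, degree_quadratic hc₂.ne']
    norm_num
  have hlead : 0 ≤ (lapsePoly c₁ c₂ m).leadingCoeff := by
    rw [lapsePoly, leadingCoeff_quadratic hc₂.ne']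
    exact hc₂.le
  obtain ⟨R, hR⟩ := eventually_atTop.1
    ((tendsto_atTop_of_leadingCoeff_nonneg _ hdeg hlead).eventually_gt_atTop 0)
  refine ⟨max (max R r₀) 0, by simp, le_max_right _ _, fun i u hu => ?_⟩
  simp only [max_lt_iff] at hu
  exact hasDerivAt_radialTower i hu.2.ne' (hR u hu.1.1.le).ne'

theorem exterior_metric_sub_eq {c₁ c₂ m : ℝ} {N2 : ℝ → ℝ}
    (hN2 : ∀ r, N2 r = c₁ - m / r + c₂ * r) (x : EuclideanSpace ℝ (Fin 3)) (a b : Fin 3) :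
    (x a * x b / ‖x‖ ^ 2) * ((1 - N2 ‖x‖) / N2 ‖x‖) =
      ⟪EuclideanSpace.single a 1, x⟫ *
        (⟪EuclideanSpace.single b 1, x⟫ * lapseTower c₁ c₂ m 0 ‖x‖) := by
  rcases eq_or_ne x 0 with rfl | hx
  · simp
  have hx0 : ‖x‖ ≠ 0 := norm_ne_zero_iff.2 hx
  have hN : N2 ‖x‖ = (lapsePoly c₁ c₂ m).eval ‖x‖ / ‖x‖ := by
    rw [hN2, lapsePoly]
    simp only [eval_add, eval_mul, eval_C, eval_pow, eval_X]
    field_simp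
    ring
  simp only [EuclideanSpace.inner_single_left, map_one, one_mul, lapseTower, radialTower,
    towerNum, eval_sub, eval_X, hN]
  rcases eq_or_ne ((lapsePoly c₁ c₂ m).eval ‖x‖) 0 with hM | hM
  · simp [hM]
  field_simp
  ring

theorem pd3_sub_const (k : Fin 3) (f : EuclideanSpace ℝ (Fin 3) → ℝ) (c : ℝ) :
    pd3 k (fun x => f x - c) = pd3 k f := by
  ext x
  simp only [pd3, fderiv_sub_const]

theorem IsRadialSymbol.pd3 {G : ℕ → ℝ → ℝ} {R : ℝ} {w : ℕ} {f : EuclideanSpace ℝ (Fin 3) → ℝ}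
    (hR : 0 ≤ R) (hG : ∀ i u, R < u → HasDerivAt (G i) (u * G (i + 1) u) u)
    (hf : IsRadialSymbol G R w f) (k : Fin 3) : IsRadialSymbol G R (w + 1) (pd3 k f) :=
  (hf.differentiableAt_and_fderiv_apply hR hG).2 _

end ExteriorMetric

theorem stmt_16_general (c₁ c₂ m rstar : ℝ) (hc₂ : 0 < c₂)
    (N2 : ℝ → ℝ) (hN2 : ∀ r : ℝ, N2 r = c₁ - m/r + c₂*r)
    (g : EuclideanSpace ℝ (Fin 3) → Fin 3 → Fin 3 → ℝ)
    (hg : ∀ x : EuclideanSpace ℝ (Fin 3), rstar < ‖x‖ → ∀ i j,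
      g x i j = (if i = j then (1:ℝ) else 0)
        + (x i * x j / ‖x‖^2) * ((1 - N2 ‖x‖) / N2 ‖x‖))
    (T : Fin 3 → EuclideanSpace ℝ (Fin 3) → ℝ)
    (hT : ∀ j x, T j x =
      (∑ i, ∑ a, pd3 j (pd3 i (pd3 i (fun y => g y a a))) x)
      - (∑ u, ∑ i, pd3 j (pd3 u (pd3 i (fun y => g y u i))) x)) :
    (∃ C R₀ : ℝ, ∀ i j k, ∀ x : EuclideanSpace ℝ (Fin 3), R₀ ≤ ‖x‖ →
      |g x i j - (if i = j then (1:ℝ) else 0)| ≤ C ∧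
      |pd3 k (fun y => g y i j) x| ≤ C / ‖x‖) ∧
    (∃ C R₀ : ℝ, ∀ j, ∀ x : EuclideanSpace ℝ (Fin 3), R₀ ≤ ‖x‖ →
      |T j x| ≤ C / ‖x‖^3) ∧
    Tendsto (fun r : ℝ =>
        ∫ ω in Metric.sphere (0 : EuclideanSpace ℝ (Fin 3)) 1,
          (∑ j, T j (r • ω) * ω j) * r^2 ∂(μH[2]))
      atTop (nhds 0) := by
  obtain ⟨R, hrR, hR, hG⟩ := exists_hasDerivAt_lapseTower c₁ m hc₂ rstar
  have hGO := lapseTower_isBigO c₁ m hc₂.ne'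
  have hg₀ : ∀ a b, IsRadialSymbol (lapseTower c₁ c₂ m) R 0
      fun x => g x a b - if a = b then 1 else 0 := fun a b =>
    (((IsRadialSymbol.radial 0).inner_mul _).inner_mul _).congr fun x (hx : R < ‖x‖) => by
      rw [hg x (hrR.trans_lt hx), add_sub_cancel_left, exterior_metric_sub_eq hN2]
  have hg₁ : ∀ a b k, IsRadialSymbol (lapseTower c₁ c₂ m) R 1 (pd3 k fun x => g x a b) :=
    fun a b k => pd3_sub_const k _ _ ▸ (hg₀ a b).pd3 hR hG k
  have hT₃ : ∀ j, IsRadialSymbol (lapseTower c₁ c₂ m) R 3 (T j) := fun j => by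
    rw [show T j = (∑ i, ∑ a, pd3 j (pd3 i (pd3 i fun y => g y a a)))
        - ∑ u, ∑ i, pd3 j (pd3 u (pd3 i fun y => g y u i)) by ext x; simp [hT, Finset.sum_apply]]
    exact .sub (.sum _ fun i _ => .sum _ fun a _ => ((hg₁ a a i).pd3 hR hG i).pd3 hR hG j)
      (.sum _ fun u _ => .sum _ fun i _ => ((hg₁ u i i).pd3 hR hG u).pd3 hR hG j)
  obtain ⟨C₀, R₀, h₀⟩ := IsRadialSymbol.exists_uniform_bound hGO fun p : Fin 3 × Fin 3 => hg₀ p.1 p.2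
  obtain ⟨C₁, R₁, h₁⟩ := IsRadialSymbol.exists_uniform_bound hGO
    fun p : Fin 3 × Fin 3 × Fin 3 => hg₁ p.1 p.2.1 p.2.2
  obtain ⟨C₃, R₃, h₃⟩ := IsRadialSymbol.exists_uniform_bound hGO hT₃
  refine ⟨⟨max C₀ C₁, max R₀ R₁, fun i j k x hx => ⟨?_, ?_⟩⟩, ⟨C₃, R₃, h₃⟩,
    tendsto_sphere_flux_zero h₃⟩
  · simpa using (h₀ (i, j) x (le_of_max_le_left hx)).trans (by simp : C₀ / ‖x‖ ^ 0 ≤ max C₀ C₁)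
  · simpa using (h₁ (i, j, k) x (le_of_max_le_right hx)).trans
      (div_le_div_of_nonneg_right (le_max_right C₀ C₁) (by positivity))

/-- For the exterior metric
`g = N(r)⁻²dr² + r²g_{S²}`, `N² = c₁ − m/r + c₂r`, written in Cartesian
coordinates as `g_{ij} = δ_{ij} + (x_i x_j/r²)(1−N²)/N²`, one has
`g_{ij} − δ_{ij} = O(r⁰)` with derivatives decaying one order per derivative;
the third-derivative combination `∂_j∂_i∂_i g_{aa} − ∂_j∂_u∂_i g_{ui}` is
`O(r^{-3})`, and hence its flux integral over large spheres tends to `0`. -/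
theorem stmt_16 (c₁ c₂ m rstar : ℝ) (hc₁ : 0 < c₁) (hc₂ : 0 < c₂)
    (hrstar : 0 < rstar)
    (N2 : ℝ → ℝ) (hN2 : ∀ r : ℝ, N2 r = c₁ - m/r + c₂*r)
    (g : EuclideanSpace ℝ (Fin 3) → Fin 3 → Fin 3 → ℝ)
    (hg : ∀ x : EuclideanSpace ℝ (Fin 3), rstar < ‖x‖ → ∀ i j,
      g x i j = (if i = j then (1:ℝ) else 0)
        + (x i * x j / ‖x‖^2) * ((1 - N2 ‖x‖) / N2 ‖x‖))
    (T : Fin 3 → EuclideanSpace ℝ (Fin 3) → ℝ)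
    (hT : ∀ j x, T j x =
      (∑ i, ∑ a, pd3 j (pd3 i (pd3 i (fun y => g y a a))) x)
      - (∑ u, ∑ i, pd3 j (pd3 u (pd3 i (fun y => g y u i))) x)) :
    (∃ C R₀ : ℝ, ∀ i j k, ∀ x : EuclideanSpace ℝ (Fin 3), R₀ ≤ ‖x‖ →
      |g x i j - (if i = j then (1:ℝ) else 0)| ≤ C ∧
      |pd3 k (fun y => g y i j) x| ≤ C / ‖x‖) ∧
    (∃ C R₀ : ℝ, ∀ j, ∀ x : EuclideanSpace ℝ (Fin 3), R₀ ≤ ‖x‖ →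
      |T j x| ≤ C / ‖x‖^3) ∧
    Tendsto (fun r : ℝ =>
        ∫ ω in Metric.sphere (0 : EuclideanSpace ℝ (Fin 3)) 1,
          (∑ j, T j (r • ω) * ω j) * r^2 ∂(μH[2]))
      atTop (nhds 0) :=
  stmt_16_general c₁ c₂ m rstar hc₂ N2 hN2 g hg T hT
end

section
/- Let g, g' be two expressions of the same asymptotically Schwarzschild metric in two asymptotic coordinate charts x, y on ℝ³ related (after a rigid motion) by y^j = x^j + o₁(|x|⁰), with g_{ij} = (1 + m_x/(2|x|))⁴δ_{ij} + o₁(|x|^{-1}) and g'_{kl} = (1 + m_y/(2|y|))⁴δ_{kl} + o₁(|y|^{-1}). Then m_x = m_y. -/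
/-!
Compare everything at the scale `1/‖x‖` as `‖x‖ → ∞`. Since `Dy = I + o(1/‖x‖)` and
`g'_{kl} → δ_{kl}`, the transformation law gives `g₀₀(x) = g'₀₀(y(x)) + o(1/‖x‖)`; since
`‖y(x)‖ - ‖x‖ → 0`, the Schwarzschild factors at `‖y(x)‖` and at `‖x‖` differ by `o(1/‖x‖)`.
Hence `(1 + m_x/(2r))⁴ - (1 + m_y/(2r))⁴ = o(1/r)`, whereas it equals `2(m_x - m_y)/r + O(1/r²)`.
-/

open Filter Topology

section Real

variable {α : Type*} {l : Filter α} {r s f : α → ℝ}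

theorem tendsto_zero_of_tendsto_mul_atTop (hr : Tendsto r l atTop)
    (hrf : Tendsto (fun x => r x * f x) l (𝓝 0)) : Tendsto f l (𝓝 0) := by
  refine (hrf.div_atTop hr).congr' ?_
  filter_upwards [hr.eventually_ne_atTop 0] with x hx
  field_simp

theorem tendsto_mul_zero_of_tendsto_sub (hr : Tendsto r l atTop)
    (hrs : Tendsto (fun x => s x - r x) l (𝓝 0)) (hsf : Tendsto (fun x => s x * f x) l (𝓝 0)) :
    Tendsto (fun x => r x * f x) l (𝓝 0) := by
  have hs : Tendsto s l atTop := (hr.atTop_add hrs).congr fun x => by ring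
  have hf := tendsto_zero_of_tendsto_mul_atTop hs hsf
  simpa [sub_mul] using hsf.sub (hrs.mul hf)

theorem tendsto_mul_of_tendsto_mul_abs (hr : ∀ᶠ x in l, 0 ≤ r x)
    (hrf : Tendsto (fun x => r x * |f x|) l (𝓝 0)) : Tendsto (fun x => r x * f x) l (𝓝 0) := by
  refine tendsto_zero_iff_norm_tendsto_zero.2 (hrf.congr' ?_)
  filter_upwards [hr] with x hx
  rw [norm_mul, Real.norm_of_nonneg hx, Real.norm_eq_abs]

theorem tendsto_of_tendsto_mul_sub_pow_four_mul (m c : ℝ) (hr : Tendsto r l atTop)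
    (hf : Tendsto (fun x => r x * (f x - (1 + m / (2 * r x)) ^ 4 * c)) l (𝓝 0)) :
    Tendsto f l (𝓝 c) := by
  have hfactor : Tendsto (fun x => (1 + m / (2 * r x)) ^ 4) l (𝓝 1) := by
    simpa using ((tendsto_const_nhds (x := m)).div_atTop
      (hr.const_mul_atTop two_pos)).const_add 1 |>.pow 4
  simpa using (tendsto_zero_of_tendsto_mul_atTop hr hf).add (hfactor.mul_const c)

theorem tendsto_mul_pow_four_sub_pow_four (a b : ℝ) (hr : Tendsto r l atTop) :
    Tendsto (fun x => r x * ((1 + a / (2 * r x)) ^ 4 - (1 + b / (2 * r x)) ^ 4)) l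
      (𝓝 (2 * (a - b))) := by
  -- `r ((1 + a t/2)⁴ - (1 + b t/2)⁴)` expanded in `t = r⁻¹`
  set P : ℝ → ℝ := fun t => 2 * (a - b) + 3 / 2 * (a ^ 2 - b ^ 2) * t
      + 1 / 2 * (a ^ 3 - b ^ 3) * t ^ 2 + 1 / 16 * (a ^ 4 - b ^ 4) * t ^ 3
  have hP : Tendsto P (𝓝 0) (𝓝 (2 * (a - b))) := by
    simpa [P] using (show Continuous P by fun_prop).tendsto 0
  refine (hP.comp (tendsto_inv_atTop_zero.comp hr)).congr' ?_
  filter_upwards [hr.eventually_ne_atTop 0] with x hx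
  simp only [P, Function.comp]
  field_simp
  ring

theorem tendsto_mul_pow_four_sub_of_tendsto_sub (m : ℝ) (hr : Tendsto r l atTop)
    (hrs : Tendsto (fun x => s x - r x) l (𝓝 0)) :
    Tendsto (fun x => r x * ((1 + m / (2 * r x)) ^ 4 - (1 + m / (2 * s x)) ^ 4)) l (𝓝 0) := by
  have hs : Tendsto s l atTop := (hr.atTop_add hrs).congr fun x => by ring
  -- `A⁴ - B⁴ = (A - B)(A + B)(A² + B²)` with `A - B = m (s - r) / (2 r s)`, in `(r⁻¹, s⁻¹)`
  set P : ℝ × ℝ → ℝ := fun p => m / 2 * ((1 + m * p.1 / 2) + (1 + m * p.2 / 2))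
      * ((1 + m * p.1 / 2) ^ 2 + (1 + m * p.2 / 2) ^ 2)
  have hP : Tendsto (fun x => P ((r x)⁻¹, (s x)⁻¹)) l (𝓝 (P (0, 0))) :=
    ((show Continuous P by fun_prop).tendsto _).comp
      ((tendsto_inv_atTop_zero.comp hr).prodMk_nhds (tendsto_inv_atTop_zero.comp hs))
  have hquot : Tendsto (fun x => (s x - r x) * (s x)⁻¹) l (𝓝 0) := by
    simpa using hrs.mul (tendsto_inv_atTop_zero.comp hs)
  have hprod : Tendsto (fun x => (s x - r x) * (s x)⁻¹ * P ((r x)⁻¹, (s x)⁻¹)) l (𝓝 0) := by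
    simpa using hquot.mul hP
  refine hprod.congr' ?_
  filter_upwards [hr.eventually_ne_atTop 0, hs.eventually_ne_atTop 0] with x hr0 hs0
  simp only [P]
  field_simp
  ring

theorem tendsto_mul_pow_four_sub_pow_four_of_tendsto_sub (a b : ℝ) (hr : Tendsto r l atTop)
    (hrs : Tendsto (fun x => s x - r x) l (𝓝 0)) :
    Tendsto (fun x => r x * ((1 + a / (2 * r x)) ^ 4 - (1 + b / (2 * s x)) ^ 4)) l
      (𝓝 (2 * (a - b))) := by
  simpa using ((tendsto_mul_pow_four_sub_pow_four a b hr).add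
    (tendsto_mul_pow_four_sub_of_tendsto_sub b hr hrs)).congr fun x => by ring

end Real

theorem tendsto_mul_quadForm_sub {α ι : Type*} [Fintype ι] {l : Filter α} {r : α → ℝ}
    {a : α → ι → ℝ} {G : α → ι → ι → ℝ} {e : ι → ℝ} {c : ι → ι → ℝ}
    (hr : Tendsto r l atTop) (ha : ∀ k, Tendsto (fun x => r x * (a x k - e k)) l (𝓝 0))
    (hG : ∀ k j, Tendsto (fun x => G x k j) l (𝓝 (c k j))) :
    Tendsto (fun x => r x * (∑ k, ∑ j, a x k * a x j * G x k j
      - ∑ k, ∑ j, e k * e j * G x k j)) l (𝓝 0) := by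
  have ha' : ∀ j, Tendsto (fun x => a x j) l (𝓝 (e j)) := fun j => by
    simpa using (tendsto_zero_of_tendsto_mul_atTop hr (ha j)).add_const (e j)
  have hsplit : ∀ x, r x * (∑ k, ∑ j, a x k * a x j * G x k j - ∑ k, ∑ j, e k * e j * G x k j)
      = ∑ k, ∑ j, (r x * (a x k - e k) * a x j + e k * (r x * (a x j - e j))) * G x k j := by
    intro x
    simp only [← Finset.sum_sub_distrib, Finset.mul_sum]
    refine Finset.sum_congr rfl fun k _ => Finset.sum_congr rfl fun j _ => ?_
    ring
  simp only [hsplit]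
  simpa using tendsto_finsetSum _ fun k _ => tendsto_finsetSum _ fun j _ =>
    (((ha k).mul (ha' j)).add ((ha j).const_mul (e k))).mul (hG k j)

theorem tendsto_mul_fderiv_single_sub {ι : Type*} [Fintype ι] [DecidableEq ι]
    {l : Filter (EuclideanSpace ℝ ι)} {y : EuclideanSpace ℝ ι → EuclideanSpace ℝ ι}
    (hy : Differentiable ℝ y)
    (hy1 : Tendsto (fun x => ‖x‖ * ‖fderiv ℝ (fun z => y z - z) x‖) l (𝓝 0)) (i k : ι) :
    Tendsto (fun x => ‖x‖ * (fderiv ℝ y x (EuclideanSpace.single i 1) k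
      - EuclideanSpace.single i (1 : ℝ) k)) l (𝓝 0) := by
  refine squeeze_zero_norm (fun x => ?_) hy1
  have hD : fderiv ℝ y x (EuclideanSpace.single i 1) - EuclideanSpace.single i 1
      = fderiv ℝ (fun z => y z - z) x (EuclideanSpace.single i 1) := by
    rw [fderiv_fun_sub (hy x) differentiableAt_fun_id, fderiv_fun_id]
    rfl
  calc ‖‖x‖ * (fderiv ℝ y x (EuclideanSpace.single i 1) k - EuclideanSpace.single i (1 : ℝ) k)‖
      = ‖x‖ * ‖fderiv ℝ (fun z => y z - z) x (EuclideanSpace.single i 1) k‖ := by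
        rw [norm_mul, norm_norm, ← hD]
        rfl
    _ ≤ ‖x‖ * (‖fderiv ℝ (fun z => y z - z) x‖ * ‖EuclideanSpace.single i (1 : ℝ)‖) := by
        gcongr
        exact (PiLp.norm_apply_le _ k).trans (ContinuousLinearMap.le_opNorm _ _)
    _ = ‖x‖ * ‖fderiv ℝ (fun z => y z - z) x‖ := by simp

section NormedAddCommGroup

variable {E : Type*} [NormedAddCommGroup E] {l : Filter E} {y : E → E}

theorem tendsto_norm_sub_norm_of_tendsto_norm_sub (hy : Tendsto (fun x => ‖y x - x‖) l (𝓝 0)) :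
    Tendsto (fun x => ‖y x‖ - ‖x‖) l (𝓝 0) :=
  squeeze_zero_norm (fun _ => abs_norm_sub_norm_le _ _) hy

theorem tendsto_comap_norm_atTop_of_tendsto_norm_sub
    (hy : Tendsto (fun x => ‖y x - x‖) (comap norm atTop) (𝓝 0)) :
    Tendsto y (comap norm atTop) (comap norm atTop) :=
  tendsto_comap_iff.2 <| (tendsto_comap.atTop_add
    (tendsto_norm_sub_norm_of_tendsto_norm_sub hy)).congr fun _ => by simp

end NormedAddCommGroup

theorem stmt_17_general (mx my : ℝ)
    (y : EuclideanSpace ℝ (Fin 3) → EuclideanSpace ℝ (Fin 3))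
    (g g' : EuclideanSpace ℝ (Fin 3) → Fin 3 → Fin 3 → ℝ)
    (hyDiff : Differentiable ℝ y)
    -- y x = x + o₁(1):
    (hy0 : Tendsto (fun x : EuclideanSpace ℝ (Fin 3) => ‖y x - x‖)
      (comap norm atTop) (nhds 0))
    (hy1 : Tendsto (fun x : EuclideanSpace ℝ (Fin 3) =>
        ‖x‖ * ‖fderiv ℝ (fun z => y z - z) x‖)
      (comap norm atTop) (nhds 0))
    -- g_{ij}(x) = (1 + m_x/(2|x|))⁴ δ_{ij} + o₁(|x|⁻¹):
    (hgx0 : ∀ i j, Tendsto (fun x : EuclideanSpace ℝ (Fin 3) =>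
        ‖x‖ * |g x i j - (1 + mx/(2*‖x‖))^4 * (if i = j then (1:ℝ) else 0)|)
      (comap norm atTop) (nhds 0))
    -- g'_{kl}(y) = (1 + m_y/(2|y|))⁴ δ_{kl} + o₁(|y|⁻¹):
    (hgy0 : ∀ k l, Tendsto (fun x : EuclideanSpace ℝ (Fin 3) =>
        ‖x‖ * |g' x k l - (1 + my/(2*‖x‖))^4 * (if k = l then (1:ℝ) else 0)|)
      (comap norm atTop) (nhds 0))
    -- the tensor transformation law g_{ij} = (∂y^k/∂x^i)(∂y^l/∂x^j) g'_{kl}∘y: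
    (hrel : ∀ (x : EuclideanSpace ℝ (Fin 3)) (i j : Fin 3),
      g x i j = ∑ k, ∑ l,
        (fderiv ℝ y x (EuclideanSpace.single i 1)) k
        * (fderiv ℝ y x (EuclideanSpace.single j 1)) l
        * g' (y x) k l) :
    mx = my := by
  set L : Filter (EuclideanSpace ℝ (Fin 3)) := comap norm atTop with hL
  have : L.NeBot := by
    rw [hL, comap_norm_atTop]; infer_instance
  have hnorm : Tendsto (norm : EuclideanSpace ℝ (Fin 3) → ℝ) L atTop := tendsto_comap
  have hnonneg : ∀ᶠ x : EuclideanSpace ℝ (Fin 3) in L, 0 ≤ ‖x‖ := .of_forall fun x => norm_nonneg x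
  have hyl := tendsto_comap_norm_atTop_of_tendsto_norm_sub hy0
  have hnn := tendsto_norm_sub_norm_of_tendsto_norm_sub hy0
  have hgx : Tendsto (fun x => ‖x‖ * (g x 0 0 - (1 + mx / (2 * ‖x‖)) ^ 4)) L (𝓝 0) := by
    simpa using tendsto_mul_of_tendsto_mul_abs hnonneg (hgx0 0 0)
  have hgy k l := tendsto_mul_of_tendsto_mul_abs hnonneg (hgy0 k l)
  have hjac : Tendsto (fun x => ‖x‖ * (g x 0 0 - g' (y x) 0 0)) L (𝓝 0) := by
    have := tendsto_mul_quadForm_sub hnorm (tendsto_mul_fderiv_single_sub hyDiff hy1 0)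
      fun k l => (tendsto_of_tendsto_mul_sub_pow_four_mul my _ hnorm (hgy k l)).comp hyl
    simpa [hrel, PiLp.single_apply] using this
  have hg'y : Tendsto (fun x => ‖x‖ * (g' (y x) 0 0 - (1 + my / (2 * ‖y x‖)) ^ 4)) L (𝓝 0) :=
    tendsto_mul_zero_of_tendsto_sub hnorm hnn
      (by simpa [Function.comp_def, -comap_norm_atTop] using (hgy 0 0).comp hyl)
  have hzero : Tendsto (fun x => ‖x‖ * ((1 + mx / (2 * ‖x‖)) ^ 4
      - (1 + my / (2 * ‖y x‖)) ^ 4)) L (𝓝 0) := by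
    convert (hjac.sub hgx).add hg'y using 1
    · funext x; ring
    · simp
  linarith [tendsto_nhds_unique
    (tendsto_mul_pow_four_sub_pow_four_of_tendsto_sub mx my hnorm hnn) hzero]

/-- Two asymptotically Schwarzschild expressions of the same
metric in charts related (after a rigid motion) by `y = x + o₁(|x|⁰)` have the
same mass: if `g_{ij}(x) = (1+m_x/(2|x|))⁴δ_{ij} + o₁(|x|⁻¹)`,
`g'_{kl}(y) = (1+m_y/(2|y|))⁴δ_{kl} + o₁(|y|⁻¹)` and
`g_{ij}(x) = (∂y^k/∂x^i)(∂y^l/∂x^j) g'_{kl}(y(x))`, then `m_x = m_y`.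
Here `o₁(|x|^s)` means `o(|x|^s)` with first derivative `o(|x|^{s-1})`, stated
along the filter `comap ‖·‖ atTop` (i.e. as `‖x‖ → ∞`). -/
theorem stmt_17 (mx my : ℝ)
    (y : EuclideanSpace ℝ (Fin 3) → EuclideanSpace ℝ (Fin 3))
    (g g' : EuclideanSpace ℝ (Fin 3) → Fin 3 → Fin 3 → ℝ)
    (hyDiff : Differentiable ℝ y)
    -- y x = x + o₁(1):
    (hy0 : Tendsto (fun x : EuclideanSpace ℝ (Fin 3) => ‖y x - x‖)
      (comap norm atTop) (nhds 0))
    (hy1 : Tendsto (fun x : EuclideanSpace ℝ (Fin 3) =>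
        ‖x‖ * ‖fderiv ℝ (fun z => y z - z) x‖)
      (comap norm atTop) (nhds 0))
    -- g_{ij}(x) = (1 + m_x/(2|x|))⁴ δ_{ij} + o₁(|x|⁻¹):
    (hgx0 : ∀ i j, Tendsto (fun x : EuclideanSpace ℝ (Fin 3) =>
        ‖x‖ * |g x i j - (1 + mx/(2*‖x‖))^4 * (if i = j then (1:ℝ) else 0)|)
      (comap norm atTop) (nhds 0))
    (hgx1 : ∀ i j, Tendsto (fun x : EuclideanSpace ℝ (Fin 3) =>
        ‖x‖^2 * ‖fderiv ℝ (fun z => g z i j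
          - (1 + mx/(2*‖z‖))^4 * (if i = j then (1:ℝ) else 0)) x‖)
      (comap norm atTop) (nhds 0))
    -- g'_{kl}(y) = (1 + m_y/(2|y|))⁴ δ_{kl} + o₁(|y|⁻¹):
    (hgy0 : ∀ k l, Tendsto (fun x : EuclideanSpace ℝ (Fin 3) =>
        ‖x‖ * |g' x k l - (1 + my/(2*‖x‖))^4 * (if k = l then (1:ℝ) else 0)|)
      (comap norm atTop) (nhds 0))
    (hgy1 : ∀ k l, Tendsto (fun x : EuclideanSpace ℝ (Fin 3) =>
        ‖x‖^2 * ‖fderiv ℝ (fun z => g' z k l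
          - (1 + my/(2*‖z‖))^4 * (if k = l then (1:ℝ) else 0)) x‖)
      (comap norm atTop) (nhds 0))
    -- the tensor transformation law g_{ij} = (∂y^k/∂x^i)(∂y^l/∂x^j) g'_{kl}∘y:
    (hrel : ∀ (x : EuclideanSpace ℝ (Fin 3)) (i j : Fin 3),
      g x i j = ∑ k, ∑ l,
        (fderiv ℝ y x (EuclideanSpace.single i 1)) k
        * (fderiv ℝ y x (EuclideanSpace.single j 1)) l
        * g' (y x) k l) :
    mx = my :=
  stmt_17_general mx my y g g' hyDiff hy0 hy1 hgx0 hgy0 hrel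
end
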